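/- arXiv:1206.3787 — 3 statements merged into one kernel-verified Lean document; each statement's English description precedes it below -/
import Mathlib

section
/- For every integer N ≥ 1 and all p ∈ ℂ^N, t ∈ ℂ^{N+1} satisfying |Im p_i| < 2 for i = 1,…,N and |Im t_j| < π/2 for j = 1,…,N+1, the function z ↦ exp(i z·p) · ∏_{1≤j<k≤N} sinh(z_j−z_k) / ∏_{j=1}^{N+1} ∏_{k=1}^{N} cosh(t_j−z_k) is Lebesgue integrable on ℝ^N (i.e. the integral I_N(p,t) = ∫_{ℝ^N} exp(i z·p) ∏_{1≤j<k≤N} sinh(z_j−z_k) / ∏_{j=1}^{N+1} ∏_{k=1}^{N} cosh(t_j−z_k) dz converges absolutely). -/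
/-!
For real `z`, `|exp(i z·p)| ≤ exp(Σ |Im pₖ| |zₖ|)` and `|sinh(zⱼ - zₖ)| ≤ exp(|zⱼ| + |zₖ|)`,
so the numerator is at most `exp(Σ |Im pₖ| |zₖ| + (N - 1) Σ |zₖ|)`, each `zₖ` occurring in
`N - 1` pairs. Since `Re cosh w = cosh (Re w) cos (Im w)`, the condition `|Im tⱼ| < π/2` gives
`|cosh(tⱼ - zₖ)| ≥ cⱼ exp |zₖ|` with `cⱼ > 0`, so the denominator is at least
`C exp((N + 1) Σ |zₖ|)`. The integrand is therefore dominated by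
`C⁻¹ ∏ₖ exp(-(2 - |Im pₖ|) |zₖ|)`, which is integrable because `|Im pₖ| < 2`.
-/

open MeasureTheory Complex

lemma Complex.re_cosh (w : ℂ) : (cosh w).re = Real.cosh w.re * Real.cos w.im := by
  conv_lhs => rw [← re_add_im w, cosh_add, cosh_mul_I, sinh_mul_I]
  simp [← ofReal_cosh, ← ofReal_sinh, ← ofReal_cos, ← ofReal_sin]

lemma Real.exp_abs_le_two_mul_cosh (u : ℝ) : Real.exp |u| ≤ 2 * Real.cosh u := by
  rw [← Real.cosh_abs, Real.cosh_eq]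
  linarith [Real.exp_pos (-|u|)]

lemma Real.abs_sinh_le_exp_abs (u : ℝ) : |Real.sinh u| ≤ Real.exp |u| := by
  rw [Real.abs_sinh, Real.sinh_eq]
  linarith [Real.exp_pos (-|u|), Real.exp_pos |u|]

lemma norm_cexp_I_mul_sum_le {ι : Type*} [Fintype ι] (z : ι → ℝ) (p : ι → ℂ) :
    ‖cexp (I * ∑ i, (z i : ℂ) * p i)‖ ≤ Real.exp (∑ i, |(p i).im| * |z i|) := by
  rw [norm_exp, Real.exp_le_exp]
  have hre : (I * ∑ i, (z i : ℂ) * p i).re = -∑ i, z i * (p i).im := by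
    simp [mul_re, im_sum, mul_im]
  calc (I * ∑ i, (z i : ℂ) * p i).re
      ≤ |∑ i, z i * (p i).im| := hre ▸ neg_le_abs _
    _ ≤ ∑ i, |z i * (p i).im| := Finset.abs_sum_le_sum_abs _ _
    _ = ∑ i, |(p i).im| * |z i| := by simp only [abs_mul, mul_comm]

lemma sum_filter_lt_add_add_sum {ι M : Type*} [Fintype ι] [LinearOrder ι] [AddCommMonoid M]
    (a : ι → M) :
    ∑ q ∈ Finset.univ.filter (fun q : ι × ι => q.1 < q.2), (a q.1 + a q.2) + ∑ i, a i
      = Fintype.card ι • ∑ i, a i := by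
  have hswap : ∑ q ∈ Finset.univ.filter (fun q : ι × ι => q.1 < q.2), a q.2
      = ∑ q ∈ Finset.univ.filter (fun q : ι × ι => q.2 < q.1), a q.1 :=
    Finset.sum_equiv (Equiv.prodComm ι ι) (by simp) (by simp)
  have hdiag : ∑ i, a i = ∑ q : ι × ι, if q.1 = q.2 then a q.1 else 0 := by
    simp [Fintype.sum_prod_type]
  calc _ = ∑ q : ι × ι, a q.1 := by
        rw [Finset.sum_add_distrib, hswap, hdiag, Finset.sum_filter, Finset.sum_filter,
          ← Finset.sum_add_distrib, ← Finset.sum_add_distrib]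
        refine Finset.sum_congr rfl fun q _ => ?_
        rcases lt_trichotomy q.1 q.2 with h | h | h
        · simp [h, h.ne, h.not_gt]
        · simp [h]
        · simp [h, h.ne', h.not_gt]
    _ = Fintype.card ι • ∑ i, a i := by simp [Fintype.sum_prod_type, Finset.smul_sum]

lemma norm_prod_sinh_sub_le {ι : Type*} [Fintype ι] [LinearOrder ι] (z : ι → ℝ) :
    ‖∏ q ∈ Finset.univ.filter (fun q : ι × ι => q.1 < q.2), sinh ((z q.1 : ℂ) - (z q.2 : ℂ))‖
      ≤ Real.exp (((Fintype.card ι : ℝ) - 1) * ∑ i, |z i|) := by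
  have hpairs := sum_filter_lt_add_add_sum fun i => |z i|
  rw [nsmul_eq_mul] at hpairs
  rw [norm_prod, show ((Fintype.card ι : ℝ) - 1) * ∑ i, |z i|
    = ∑ q ∈ Finset.univ.filter (fun q : ι × ι => q.1 < q.2), (|z q.1| + |z q.2|) by linarith,
    Real.exp_sum]
  refine Finset.prod_le_prod (fun _ _ => norm_nonneg _) fun q _ => ?_
  rw [← ofReal_sub, ← ofReal_sinh, norm_real, Real.norm_eq_abs]
  exact (Real.abs_sinh_le_exp_abs _).trans (Real.exp_le_exp.mpr (abs_sub _ _))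

lemma integrable_exp_neg_mul_abs {b : ℝ} (hb : 0 < b) :
    Integrable (fun x : ℝ => Real.exp (-b * |x|)) := by
  refine (Continuous.locallyIntegrable (by fun_prop)).integrable_of_isBigO_atTop_of_norm_isNegInvariant
    (g := fun x => Real.exp (-b * x)) (ae_of_all _ fun x => by simp) ?_
    ⟨Set.Ioi 0, Filter.Ioi_mem_atTop 0, exp_neg_integrableOn_Ioi 0 hb⟩
  refine Filter.EventuallyEq.isBigO ?_
  filter_upwards [Filter.eventually_ge_atTop 0] with x hx
  rw [abs_of_nonneg hx]

lemma mul_exp_abs_le_norm_cosh_sub (t : ℂ) (ht : 0 ≤ Real.cos t.im) (x : ℝ) :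
    Real.cos t.im / 2 * Real.exp (-|t.re|) * Real.exp |x| ≤ ‖cosh (t - x)‖ :=
  calc Real.cos t.im / 2 * Real.exp (-|t.re|) * Real.exp |x|
      ≤ Real.cos t.im * (Real.exp |t.re - x| / 2) := by
        rw [mul_assoc, ← Real.exp_add, div_mul_eq_mul_div, mul_div_assoc]
        gcongr
        linarith [abs_sub_abs_le_abs_sub x t.re, abs_sub_comm x t.re]
    _ ≤ Real.cos t.im * Real.cosh (t.re - x) := by
        gcongr
        linarith [Real.exp_abs_le_two_mul_cosh (t.re - x)]
    _ = (cosh (t - x)).re := by simp [re_cosh, mul_comm]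
    _ ≤ ‖cosh (t - x)‖ := re_le_norm _

lemma prod_le_norm_prod_prod_cosh_sub {J ι : Type*} [Fintype J] [Fintype ι] (t : J → ℂ)
    (ht : ∀ j, 0 ≤ Real.cos (t j).im) (z : ι → ℝ) :
    (∏ j, (Real.cos (t j).im / 2 * Real.exp (-|(t j).re|)) ^ Fintype.card ι) *
        Real.exp (Fintype.card J * ∑ k, |z k|)
      ≤ ‖∏ j, ∏ k, cosh (t j - z k)‖ :=
  calc _ = ∏ j, ∏ k, Real.cos (t j).im / 2 * Real.exp (-|(t j).re|) * Real.exp |z k| := by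
        simp [Finset.prod_mul_distrib, ← Real.exp_sum, ← Real.exp_nat_mul]
    _ ≤ ∏ j, ∏ k, ‖cosh (t j - z k)‖ := by
        refine Finset.prod_le_prod (fun j _ => ?_) fun j _ => Finset.prod_le_prod
          (fun k _ => ?_) fun k _ => mul_exp_abs_le_norm_cosh_sub (t j) (ht j) (z k)
        all_goals have := ht j; positivity
    _ = ‖∏ j, ∏ k, cosh (t j - z k)‖ := by simp [norm_prod]

theorem statement0_general (N : ℕ) (p : Fin N → ℂ) (t : Fin (N + 1) → ℂ)
    (hp : ∀ i : Fin N, |(p i).im| < 2)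
    (ht : ∀ j : Fin (N + 1), |(t j).im| < Real.pi / 2) :
    Integrable (fun z : Fin N → ℝ =>
      Complex.exp (Complex.I * ∑ i : Fin N, (z i : ℂ) * p i) *
        (∏ q ∈ Finset.univ.filter (fun q : Fin N × Fin N => q.1 < q.2),
          Complex.sinh ((z q.1 : ℂ) - (z q.2 : ℂ))) /
        ∏ j : Fin (N + 1), ∏ k : Fin N, Complex.cosh (t j - (z k : ℂ))) := by
  have hcos (j : Fin (N + 1)) : 0 < Real.cos (t j).im :=
    Real.cos_pos_of_mem_Ioo ⟨by linarith [(abs_lt.mp (ht j)).1], (abs_lt.mp (ht j)).2⟩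
  set C := ∏ j, (Real.cos (t j).im / 2 * Real.exp (-|(t j).re|)) ^ N
  have hC : 0 < C := Finset.prod_pos fun j _ => by have := hcos j; positivity
  have hG : Integrable fun z : Fin N → ℝ => C⁻¹ * ∏ k, Real.exp (-(2 - |(p k).im|) * |z k|) :=
    (Integrable.fintype_prod fun k => integrable_exp_neg_mul_abs (by linarith [hp k])).const_mul _
  refine hG.mono' (by fun_prop : Measurable _).aestronglyMeasurable (ae_of_all _ fun z => ?_)
  have hden := prod_le_norm_prod_prod_cosh_sub t (fun j => (hcos j).le) z
  have hsinh := norm_prod_sinh_sub_le z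
  simp only [Fintype.card_fin, Nat.cast_add, Nat.cast_one] at hden hsinh
  rw [norm_div, norm_mul]
  calc _ ≤ Real.exp (∑ k, |(p k).im| * |z k|) * Real.exp ((N - 1) * ∑ k, |z k|) /
        (C * Real.exp ((N + 1) * ∑ k, |z k|)) :=
        div_le_div₀ (by positivity) (mul_le_mul (norm_cexp_I_mul_sum_le z p) hsinh
          (norm_nonneg _) (Real.exp_nonneg _)) (by positivity) hden
    _ = C⁻¹ * ∏ k, Real.exp (-(2 - |(p k).im|) * |z k|) := by
        rw [← Real.exp_sum, ← Real.exp_add, mul_comm C, ← div_div, ← Real.exp_sub,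
          div_eq_inv_mul]
        congr 2
        simp only [neg_sub, sub_mul, Finset.sum_sub_distrib, ← Finset.mul_sum]
        ring

/-- Absolute convergence of the integral `I_N(p,t)` (Lemma C.1, first part):
for `N ≥ 1`, `p ∈ ℂ^N` with `|Im p_i| < 2` and `t ∈ ℂ^{N+1}` with `|Im t_j| < π/2`, the
integrand of `I_N(p,t)` is Lebesgue integrable on `ℝ^N`. -/
theorem statement0 (N : ℕ) (hN : 1 ≤ N) (p : Fin N → ℂ) (t : Fin (N + 1) → ℂ)
    (hp : ∀ i : Fin N, |(p i).im| < 2)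
    (ht : ∀ j : Fin (N + 1), |(t j).im| < Real.pi / 2) :
    Integrable (fun z : Fin N → ℝ =>
      Complex.exp (Complex.I * ∑ i : Fin N, (z i : ℂ) * p i) *
        (∏ q ∈ Finset.univ.filter (fun q : Fin N × Fin N => q.1 < q.2),
          Complex.sinh ((z q.1 : ℂ) - (z q.2 : ℂ))) /
        ∏ j : Fin (N + 1), ∏ k : Fin N, Complex.cosh (t j - (z k : ℂ))) :=
  statement0_general N p t hp ht
end

section
/- Let N ≥ 1 and define F_N(p,z) = Σ_{τ∈S_N} sgn(τ) · exp(i Σ_{j=1}^{N} z_{τ(j)} p_j) for p, z ∈ ℂ^N. Then there exists an entire function H on ℂ^N × ℂ^N such that F_N(p,z) = H(p,z) · ∏_{1≤m<n≤N} (p_m−p_n)(z_m−z_n) for all p, z ∈ ℂ^N, and H(0,0) = i^{N(N−1)/2} / (1!·2!⋯(N−1)!). -/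
/-!
Expand `exp (i z_m p_n) = ∑_r i^r (z_m p_n)^r / r!` and write each power in Newton form over
the nodes `z_0, …, z_{N-1}`: `t^r = ∑_a [z_0, …, z_a](·^r) ∏_{j<a} (t - z_j)`, and likewise in `p`.
This factors the matrix `(exp (i z_m p_n))` as `A Φ Bᵀ`, where `A`, `B` are lower triangular with
the Vandermonde products as determinants and `Φ_{ab}` is the double divided difference of
`exp (i s t)`, so `H = det Φ`. Divided differences of `t^r` are bounded by `2^(a+r) R^r`, so the
series for `Φ_{ab}` converge locally uniformly and `H` is entire; at the origin `Φ` is diagonal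
with entries `i^a / a!`.
-/

open Complex Finset Metric
open scoped Nat Matrix

noncomputable section

theorem differentiable_tsum_of_summable_norm_on_balls {ι E F : Type*} [NormedAddCommGroup E]
    [NormedSpace ℂ E] [NormedAddCommGroup F] [NormedSpace ℂ F] [CompleteSpace F]
    {f : ι → E → F} (hf : ∀ i, Differentiable ℂ (f i))
    (hbound : ∀ R, ∃ u : ι → ℝ, Summable u ∧ ∀ i w, ‖w‖ ≤ R → ‖f i w‖ ≤ u i) :
    Differentiable ℂ fun w => ∑' i, f i w := by
  intro w₀
  obtain ⟨u, hu, hfu⟩ := hbound (‖w₀‖ + 2)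
  have hs : w₀ ∈ ball (0 : E) (‖w₀‖ + 1) := by simp
  -- Cauchy estimate on the unit ball around `w`: `f i` maps it into `closedBall (f i w) (2 * u i)`
  have hderiv : ∀ i, ∀ w ∈ ball (0 : E) (‖w₀‖ + 1), ‖fderiv ℂ (f i) w‖ ≤ 2 * u i := by
    intro i w hw
    rw [mem_ball_zero_iff] at hw
    have hball : ∀ v ∈ ball w 1, ‖f i v‖ ≤ u i := fun v hv => hfu i v <| by
      rw [mem_ball_iff_norm] at hv
      linarith [norm_le_insert' v w]
    simpa using Complex.norm_fderiv_le_div_of_mapsTo_ball (hf i).differentiableOn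
      (fun v hv => mem_closedBall_iff_norm.2 <| (norm_sub_le _ _).trans <|
        (add_le_add (hball v hv) (hball w (mem_ball_self one_pos))).trans_eq (two_mul _).symm)
      one_pos
  exact (hasFDerivAt_tsum_of_isPreconnected (hu.mul_left 2) isOpen_ball
    (convex_ball _ _).isPreconnected (fun i w _ => (hf i w).hasFDerivAt) hderiv hs
    (hu.of_norm_bounded fun i => hfu i w₀ (by linarith)) hs).differentiableAt

theorem differentiable_det {𝕜 E n : Type*} [NontriviallyNormedField 𝕜] [NormedAddCommGroup E]
    [NormedSpace 𝕜 E] [Fintype n] [DecidableEq n] {M : E → Matrix n n 𝕜}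
    (hM : ∀ i j, Differentiable 𝕜 fun w => M w i j) : Differentiable 𝕜 fun w => (M w).det := by
  simp only [Matrix.det_apply']
  fun_prop

theorem sum_sign_mul_exp_eq_det {n : Type*} [Fintype n] [DecidableEq n] (z p : n → ℂ) :
    ∑ τ : Equiv.Perm n, ((Equiv.Perm.sign τ : ℤ) : ℂ) * exp (I * ∑ j, z (τ j) * p j) =
      (Matrix.of fun m k => exp (I * (z m * p k))).det := by
  simp only [Matrix.det_apply', Matrix.of_apply, mul_sum, exp_sum]

theorem prod_filter_lt_eq_prod_prod_Iio {α M : Type*} [Fintype α] [LinearOrder α]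
    [LocallyFiniteOrderBot α] [CommMonoid M] (g : α → α → M) :
    ∏ q ∈ univ.filter (fun q : α × α => q.1 < q.2), g q.1 q.2 = ∏ m, ∏ j ∈ Iio m, g j m := by
  rw [prod_filter, ← univ_product_univ, prod_product_right]
  refine prod_congr rfl fun m _ => ?_
  rw [← prod_filter, filter_gt_eq_Iio]

theorem prod_range_val_eq_prod_Iio {N : ℕ} {M : Type*} [CommMonoid M] (f : ℕ → M) (m : Fin N) :
    ∏ j ∈ range m, f j = ∏ j ∈ Iio m, f j := by
  rw [← Nat.Iio_eq_range, ← Fin.map_valEmbedding_Iio, prod_map]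
  rfl

/-- The divided difference `[x 0, …, x a]` of `t ↦ t ^ r`, i.e. the complete homogeneous
symmetric polynomial of degree `r - a` in `x 0, …, x a` (zero when `r < a`). -/
def powDividedDiff (x : ℕ → ℂ) : ℕ → ℕ → ℂ
  | 0, r => x 0 ^ r
  | _ + 1, 0 => 0
  | a + 1, r + 1 => x (a + 1) * powDividedDiff x (a + 1) r + powDividedDiff x a r

theorem sum_powDividedDiff_succ_mul_prod (x : ℕ → ℂ) (t : ℂ) (n r : ℕ) :
    ∑ a ∈ range (n + 1), powDividedDiff x a (r + 1) * ∏ j ∈ range a, (t - x j) =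
      t * ∑ a ∈ range (n + 1), powDividedDiff x a r * ∏ j ∈ range a, (t - x j) -
        powDividedDiff x n r * ∏ j ∈ range (n + 1), (t - x j) := by
  induction n with
  | zero =>
    simp only [zero_add, sum_range_one, prod_range_zero, prod_range_one, powDividedDiff, mul_one]
    ring
  | succ n ih =>
    rw [sum_range_succ, ih, sum_range_succ _ (n + 1), prod_range_succ _ (n + 1), powDividedDiff]
    ring

theorem sum_powDividedDiff_zero_mul_prod (x : ℕ → ℂ) (t : ℂ) (n : ℕ) :
    ∑ a ∈ range (n + 1), powDividedDiff x a 0 * ∏ j ∈ range a, (t - x j) = 1 := by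
  simp [sum_range_succ', powDividedDiff]

theorem pow_eq_sum_powDividedDiff_mul_prod (x : ℕ → ℂ) {m N : ℕ} (hm : m < N) (r : ℕ) :
    x m ^ r = ∑ a ∈ range N, powDividedDiff x a r * ∏ j ∈ range a, (x m - x j) := by
  obtain ⟨n, rfl⟩ := Nat.exists_eq_add_of_lt hm
  induction r with
  | zero => rw [pow_zero, sum_powDividedDiff_zero_mul_prod]
  | succ r ih =>
    rw [sum_powDividedDiff_succ_mul_prod, ← ih,
      prod_eq_zero (mem_range.2 (by omega : m < m + n + 1)) (sub_self _)]
    ring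

theorem norm_powDividedDiff_le {x : ℕ → ℂ} {R : ℝ} (hR : 1 ≤ R) (a r : ℕ)
    (hx : ∀ j ≤ a, ‖x j‖ ≤ R) : ‖powDividedDiff x a r‖ ≤ 2 ^ (a + r) * R ^ r := by
  fun_induction powDividedDiff x a r with
  | case1 r =>
    rw [norm_pow, zero_add]
    exact (pow_le_pow_left₀ (norm_nonneg _) (hx 0 le_rfl) r).trans
      (le_mul_of_one_le_left (by positivity) (one_le_pow₀ one_le_two))
  | case2 a => simp only [norm_zero]; positivity
  | case3 a r ih₁ ih₂ =>
    calc _ ≤ R * (2 ^ (a + 1 + r) * R ^ r) + 2 ^ (a + r) * R ^ (r + 1) := by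
          refine (norm_add_le _ _).trans
            (add_le_add ?_ ((ih₂ fun j hj => hx j (by omega)).trans
              (mul_le_mul_of_nonneg_left (pow_le_pow_right₀ hR r.le_succ) (by positivity))))
          rw [norm_mul]
          exact mul_le_mul (hx _ le_rfl) (ih₁ hx) (norm_nonneg _) (by positivity)
      _ = 3 * (2 ^ (a + r) * R ^ (r + 1)) := by ring
      _ ≤ 4 * (2 ^ (a + r) * R ^ (r + 1)) := by gcongr; norm_num
      _ = 2 ^ (a + 1 + (r + 1)) * R ^ (r + 1) := by ring

/-- The double divided difference `[x 0, …, x a] [y 0, …, y b]` of `(s, t) ↦ exp (i s t)`. -/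
def expDividedDiff (x y : ℕ → ℂ) (a b : ℕ) : ℂ :=
  ∑' r, I ^ r / r ! * powDividedDiff x a r * powDividedDiff y b r

theorem norm_expDividedDiff_term_le {x y : ℕ → ℂ} {R : ℝ} (hR : 1 ≤ R) (a b r : ℕ)
    (hx : ∀ j ≤ a, ‖x j‖ ≤ R) (hy : ∀ j ≤ b, ‖y j‖ ≤ R) :
    ‖I ^ r / r ! * powDividedDiff x a r * powDividedDiff y b r‖ ≤
      2 ^ (a + b) * ((4 * R ^ 2) ^ r / r !) := by
  rw [norm_mul, norm_mul, norm_div, norm_pow, norm_I, one_pow, Complex.norm_natCast]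
  calc _ ≤ 1 / r ! * (2 ^ (a + r) * R ^ r) * (2 ^ (b + r) * R ^ r) := by
        gcongr
        exacts [norm_powDividedDiff_le hR a r hx, norm_powDividedDiff_le hR b r hy]
    _ = _ := by
        rw [mul_pow, show (4 : ℝ) ^ r = 2 ^ r * 2 ^ r by rw [← mul_pow]; norm_num]
        ring

theorem summable_expDividedDiff_term (x y : ℕ → ℂ) (a b : ℕ) :
    Summable fun r => I ^ r / r ! * powDividedDiff x a r * powDividedDiff y b r := by
  set S := ∑ j ∈ range (a + b + 1), (‖x j‖ + ‖y j‖)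
  have hS : ∀ j ≤ a + b, ‖x j‖ + ‖y j‖ ≤ S := fun j hj =>
    single_le_sum (f := fun j => ‖x j‖ + ‖y j‖) (fun _ _ => by positivity) (mem_range.2 (by omega))
  have h1S : 1 ≤ 1 + S := le_add_of_nonneg_right (sum_nonneg fun _ _ => by positivity)
  refine .of_norm_bounded ((Real.summable_pow_div_factorial _).mul_left (2 ^ (a + b)))
    fun r => norm_expDividedDiff_term_le h1S a b r (fun j hj => ?_) (fun j hj => ?_)
  · linarith [hS j (by omega), norm_nonneg (y j)]
  · linarith [hS j (by omega), norm_nonneg (x j)]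

theorem exp_mul_eq_sum_expDividedDiff (x y : ℕ → ℂ) {m n N : ℕ} (hm : m < N) (hn : n < N) :
    exp (I * (x m * y n)) = ∑ a ∈ range N, ∑ b ∈ range N,
      expDividedDiff x y a b * ((∏ j ∈ range a, (x m - x j)) * ∏ j ∈ range b, (y n - y j)) := by
  have hterm : ∀ r, (I * (x m * y n)) ^ r / r ! = ∑ a ∈ range N, ∑ b ∈ range N,
      I ^ r / r ! * powDividedDiff x a r * powDividedDiff y b r *
        ((∏ j ∈ range a, (x m - x j)) * ∏ j ∈ range b, (y n - y j)) := fun r => by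
    rw [mul_pow, mul_pow, pow_eq_sum_powDividedDiff_mul_prod x hm,
      pow_eq_sum_powDividedDiff_mul_prod y hn, sum_mul_sum, mul_div_right_comm, mul_sum]
    refine sum_congr rfl fun a _ => ?_
    rw [mul_sum]
    refine sum_congr rfl fun b _ => ?_
    ring
  have hexp := NormedSpace.expSeries_div_hasSum_exp (I * (x m * y n))
  rw [← exp_eq_exp_ℂ, funext hterm] at hexp
  exact hexp.unique <| hasSum_sum fun a _ => hasSum_sum fun b _ =>
    (summable_expDividedDiff_term x y a b).hasSum.mul_right _

theorem powDividedDiff_zero (a r : ℕ) : powDividedDiff 0 a r = if r = a then 1 else 0 := by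
  fun_induction powDividedDiff 0 a r <;> simp_all [zero_pow_eq]

theorem expDividedDiff_zero (a b : ℕ) :
    expDividedDiff 0 0 a b = if a = b then I ^ a / a ! else 0 := by
  rw [expDividedDiff, tsum_eq_single a fun r hr => by simp [powDividedDiff_zero, hr]]
  split_ifs with hab <;> simp [powDividedDiff_zero, hab]

section Differentiable

variable {E : Type*} [NormedAddCommGroup E] [NormedSpace ℂ E]

theorem differentiable_powDividedDiff {x : E → ℕ → ℂ}
    (hx : ∀ j, Differentiable ℂ fun w => x w j) (a r : ℕ) :
    Differentiable ℂ fun w => powDividedDiff (x w) a r := by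
  induction a, r using powDividedDiff.induct with
  | case1 r => simpa only [powDividedDiff] using (hx 0).fun_pow r
  | case2 a => exact differentiable_const 0
  | case3 a r ih₁ ih₂ => exact ((hx _).fun_mul ih₁).fun_add ih₂

theorem differentiable_expDividedDiff {x y : E → ℕ → ℂ}
    (hx : ∀ j, Differentiable ℂ fun w => x w j) (hy : ∀ j, Differentiable ℂ fun w => y w j)
    (hxw : ∀ w j, ‖x w j‖ ≤ ‖w‖) (hyw : ∀ w j, ‖y w j‖ ≤ ‖w‖) (a b : ℕ) :
    Differentiable ℂ fun w => expDividedDiff (x w) (y w) a b := by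
  refine differentiable_tsum_of_summable_norm_on_balls
    (fun r => ((differentiable_const _).mul (differentiable_powDividedDiff hx a r)).mul
      (differentiable_powDividedDiff hy b r))
    fun R => ⟨_, (Real.summable_pow_div_factorial (4 * max 1 R ^ 2)).mul_left (2 ^ (a + b)),
      fun r w hw => norm_expDividedDiff_term_le (le_max_left _ _) a b r
        (fun j _ => (hxw w j).trans (hw.trans (le_max_right _ _)))
        (fun j _ => (hyw w j).trans (hw.trans (le_max_right _ _)))⟩

end Differentiable

def newtonMatrix (N : ℕ) (x : ℕ → ℂ) : Matrix (Fin N) (Fin N) ℂ :=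
  .of fun m a => ∏ j ∈ range a, (x m - x j)

theorem det_newtonMatrix (N : ℕ) (x : ℕ → ℂ) :
    (newtonMatrix N x).det = ∏ m : Fin N, ∏ j ∈ range m, (x m - x j) :=
  Matrix.det_of_isLowerTriangular _ fun _ _ hma => prod_eq_zero (mem_range.2 hma) (sub_self _)

def expDividedDiffMatrix (N : ℕ) (x y : ℕ → ℂ) : Matrix (Fin N) (Fin N) ℂ :=
  .of fun a b => expDividedDiff x y a b

theorem exp_matrix_eq_newtonMatrix_mul (N : ℕ) (x y : ℕ → ℂ) :
    Matrix.of (fun m n : Fin N => exp (I * (x m * y n))) =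
      newtonMatrix N x * expDividedDiffMatrix N x y * (newtonMatrix N y)ᵀ := by
  ext m n
  rw [Matrix.of_apply, exp_mul_eq_sum_expDividedDiff x y m.isLt n.isLt, sum_comm,
    ← Fin.sum_univ_eq_sum_range, Matrix.mul_apply]
  refine sum_congr rfl fun b _ => ?_
  rw [← Fin.sum_univ_eq_sum_range, Matrix.mul_apply, sum_mul]
  refine sum_congr rfl fun a _ => ?_
  simp only [newtonMatrix, expDividedDiffMatrix, Matrix.of_apply, Matrix.transpose_apply]
  ring

theorem expDividedDiffMatrix_zero (N : ℕ) :
    expDividedDiffMatrix N 0 0 = Matrix.diagonal fun a : Fin N => I ^ (a : ℕ) / (a : ℕ)! := by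
  ext a b
  simp [expDividedDiffMatrix, expDividedDiff_zero, Matrix.diagonal_apply, Fin.val_inj]

def extendByZero {N : ℕ} (z : Fin N → ℂ) (j : ℕ) : ℂ :=
  if h : j < N then z ⟨j, h⟩ else 0

section extendByZero

variable {N : ℕ}

@[simp]
theorem extendByZero_val (z : Fin N → ℂ) (m : Fin N) : extendByZero z m = z m := by
  simp [extendByZero]

@[simp]
theorem extendByZero_zero : extendByZero (0 : Fin N → ℂ) = 0 := by
  funext j
  simp [extendByZero]

theorem norm_extendByZero_le (z : Fin N → ℂ) (j : ℕ) : ‖extendByZero z j‖ ≤ ‖z‖ := by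
  unfold extendByZero
  split_ifs
  exacts [norm_le_pi_norm z _, by simp]

theorem differentiable_extendByZero (j : ℕ) :
    Differentiable ℂ fun z : Fin N → ℂ => extendByZero z j := by
  unfold extendByZero
  split_ifs
  exacts [differentiable_apply _, differentiable_const 0]

theorem det_newtonMatrix_extendByZero_mul (p z : Fin N → ℂ) :
    (newtonMatrix N (extendByZero z)).det * (newtonMatrix N (extendByZero p)).det =
      ∏ q ∈ univ.filter (fun q : Fin N × Fin N => q.1 < q.2),
        (p q.1 - p q.2) * (z q.1 - z q.2) := by
  simp only [det_newtonMatrix, prod_range_val_eq_prod_Iio, extendByZero_val,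
    prod_filter_lt_eq_prod_prod_Iio (fun j m => (p j - p m) * (z j - z m)), ← prod_mul_distrib]
  refine prod_congr rfl fun m _ => prod_congr rfl fun j _ => ?_
  ring

end extendByZero

theorem statement6_general (N : ℕ) :
    ∃ H : (Fin N → ℂ) × (Fin N → ℂ) → ℂ,
      Differentiable ℂ H ∧
      (∀ p z : Fin N → ℂ,
        (∑ τ : Equiv.Perm (Fin N), ((Equiv.Perm.sign τ : ℤ) : ℂ) *
            Complex.exp (Complex.I * ∑ j : Fin N, z (τ j) * p j))
        = H (p, z) *
          ∏ q ∈ Finset.univ.filter (fun q : Fin N × Fin N => q.1 < q.2),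
            (p q.1 - p q.2) * (z q.1 - z q.2)) ∧
      H (0, 0) = Complex.I ^ (N * (N - 1) / 2) /
        ∏ j ∈ Finset.range N, (Nat.factorial j : ℂ) := by
  refine ⟨fun w => (expDividedDiffMatrix N (extendByZero w.2) (extendByZero w.1)).det,
    ?_, fun p z => ?_, ?_⟩
  · refine differentiable_det fun a b => differentiable_expDividedDiff
      (fun j => (differentiable_extendByZero j).comp differentiable_snd)
      (fun j => (differentiable_extendByZero j).comp differentiable_fst)
      (fun w j => (norm_extendByZero_le _ j).trans (norm_snd_le w))
      (fun w j => (norm_extendByZero_le _ j).trans (norm_fst_le w)) a b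
  · have hE := exp_matrix_eq_newtonMatrix_mul N (extendByZero z) (extendByZero p)
    simp only [extendByZero_val] at hE
    rw [sum_sign_mul_exp_eq_det, hE, Matrix.det_mul, Matrix.det_mul, Matrix.det_transpose,
      ← det_newtonMatrix_extendByZero_mul]
    ring
  · dsimp only
    rw [extendByZero_zero, expDividedDiffMatrix_zero, Matrix.det_diagonal, prod_div_distrib, prod_pow_eq_pow_sum,
      Fin.sum_univ_eq_sum_range (fun i => i), sum_range_id,
      Fin.prod_univ_eq_prod_range (fun j => (j ! : ℂ))]

/-- Factorization of the antisymmetrized exponential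
`F_N(p,z) = Σ_{τ∈S_N} sgn(τ) exp(i Σ_j z_{τ(j)} p_j)`: there is an entire function `H` on
`ℂ^N × ℂ^N` with `F_N(p,z) = H(p,z) ∏_{m<n}(p_m−p_n)(z_m−z_n)` and
`H(0,0) = i^{N(N−1)/2}/(1!·2!⋯(N−1)!)`. -/
theorem statement6 (N : ℕ) (hN : 1 ≤ N) :
    ∃ H : (Fin N → ℂ) × (Fin N → ℂ) → ℂ,
      Differentiable ℂ H ∧
      (∀ p z : Fin N → ℂ,
        (∑ τ : Equiv.Perm (Fin N), ((Equiv.Perm.sign τ : ℤ) : ℂ) *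
            Complex.exp (Complex.I * ∑ j : Fin N, z (τ j) * p j))
        = H (p, z) *
          ∏ q ∈ Finset.univ.filter (fun q : Fin N × Fin N => q.1 < q.2),
            (p q.1 - p q.2) * (z q.1 - z q.2)) ∧
      H (0, 0) = Complex.I ^ (N * (N - 1) / 2) /
        ∏ j ∈ Finset.range N, (Nat.factorial j : ℂ) :=
  statement6_general N
end
end

section
/- For all b ∈ S_a and all x, y ∈ ℝ², J₂(b;x,y) = exp(iα(x₁+x₂)(y₁+y₂)/2) · J(b; x₁−x₂, y₁−y₂), where J(b;u,v) = ∫_ℝ exp(iαzv) · ∏_{δ₁,δ₂∈{+1,−1}} G(δ₁z + δ₂u/2 − ib/2) dz. Moreover J(b;u,v) = J(b;−u,v) = J(b;u,−v) for all real u, v; consequently J₂(b;(x₁,x₂),(y₁,y₂)) = J₂(b;(x₂,x₁),(y₁,y₂)) = J₂(b;(x₁,x₂),(y₂,y₁)). -/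
open MeasureTheory Complex

/-- `α = 2π/(a₊a₋)`. -/
noncomputable def alphaPar (ap am : ℝ) : ℝ := 2 * Real.pi / (ap * am)

/-- The function `g(a₊,a₋;z)` from the integral representation of the hyperbolic gamma
function. -/
noncomputable def ghyp (ap am : ℝ) (z : ℂ) : ℂ :=
  ∫ y in Set.Ioi (0 : ℝ),
    (1 / (y : ℂ)) *
      (Complex.sin (2 * (y : ℂ) * z) /
          (2 * Complex.sinh ((ap : ℂ) * (y : ℂ)) * Complex.sinh ((am : ℂ) * (y : ℂ))) -
        z / ((ap : ℂ) * (am : ℂ) * (y : ℂ)))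

/-- The hyperbolic gamma function `G(a₊,a₋;z) = exp(i g(a₊,a₋;z))`. -/
noncomputable def Ghyp (ap am : ℝ) (z : ℂ) : ℂ := Complex.exp (Complex.I * ghyp ap am z)

/-- The two-particle joint eigenfunction
`J₂(b;x,y) = exp(iαy₂(x₁+x₂)) ∫_ℝ exp(iαz(y₁−y₂)) ∏_{j=1}^2 G(x_j−z−ib/2)/G(x_j−z+ib/2) dz`. -/
noncomputable def J2 (ap am : ℝ) (b : ℂ) (x y : Fin 2 → ℝ) : ℂ :=
  Complex.exp (Complex.I * (alphaPar ap am : ℂ) * (y 1 : ℂ) * ((x 0 : ℂ) + (x 1 : ℂ))) *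
    ∫ z : ℝ, Complex.exp (Complex.I * (alphaPar ap am : ℂ) * (z : ℂ) * ((y 0 : ℂ) - (y 1 : ℂ))) *
      ∏ j : Fin 2,
        Ghyp ap am ((x j : ℂ) - (z : ℂ) - Complex.I * b / 2) /
          Ghyp ap am ((x j : ℂ) - (z : ℂ) + Complex.I * b / 2)

/-- The reduced kernel `J(b;u,v) = ∫_ℝ exp(iαzv) ∏_{δ₁,δ₂=±1} G(δ₁z+δ₂u/2−ib/2) dz`. -/
noncomputable def Jred (ap am : ℝ) (b : ℂ) (u v : ℝ) : ℂ :=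
  ∫ z : ℝ, Complex.exp (Complex.I * (alphaPar ap am : ℂ) * (z : ℂ) * (v : ℂ)) *
    (Ghyp ap am ((z : ℂ) + (u : ℂ) / 2 - Complex.I * b / 2) *
      Ghyp ap am ((z : ℂ) - (u : ℂ) / 2 - Complex.I * b / 2) *
      Ghyp ap am (-(z : ℂ) + (u : ℂ) / 2 - Complex.I * b / 2) *
      Ghyp ap am (-(z : ℂ) - (u : ℂ) / 2 - Complex.I * b / 2))

/-! ### Auxiliary lemmas -/

lemma ghyp_neg (ap am : ℝ) (z : ℂ) : ghyp ap am (-z) = - ghyp ap am z := by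
  unfold ghyp
  rw [← integral_neg]
  congr 1
  funext y
  simp only [mul_neg, Complex.sin_neg]
  ring

lemma Ghyp_neg (ap am : ℝ) (z : ℂ) : Ghyp ap am (-z) = (Ghyp ap am z)⁻¹ := by
  unfold Ghyp
  rw [ghyp_neg, mul_neg, Complex.exp_neg]

lemma Ghyp_div (ap am : ℝ) (w w' : ℂ) :
    Ghyp ap am w / Ghyp ap am w' = Ghyp ap am w * Ghyp ap am (-w') := by
  rw [Ghyp_neg, div_eq_mul_inv]

lemma mulA (G : ℂ → ℂ) {a1 a2 a3 a4 b1 b2 b3 b4 : ℂ}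
    (h1 : a1 = b3) (h2 : a2 = b2) (h3 : a3 = b4) (h4 : a4 = b1) :
    G a1 * G a2 * (G a3 * G a4) = G b1 * G b2 * G b3 * G b4 := by
  subst h1 h2 h3 h4; ring

lemma mulB (G : ℂ → ℂ) {a1 a2 a3 a4 b1 b2 b3 b4 : ℂ}
    (h1 : a1 = b2) (h2 : a2 = b1) (h3 : a3 = b4) (h4 : a4 = b3) :
    G a1 * G a2 * G a3 * G a4 = G b1 * G b2 * G b3 * G b4 := by
  subst h1 h2 h3 h4; ring

lemma mulC (G : ℂ → ℂ) {a1 a2 a3 a4 b1 b2 b3 b4 : ℂ}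
    (h1 : a1 = b3) (h2 : a2 = b4) (h3 : a3 = b1) (h4 : a4 = b2) :
    G a1 * G a2 * G a3 * G a4 = G b1 * G b2 * G b3 * G b4 := by
  subst h1 h2 h3 h4; ring

/-- Center-of-mass reduction. -/
lemma J2_eq (ap am : ℝ) (b : ℂ) (x y : Fin 2 → ℝ) :
    J2 ap am b x y =
      Complex.exp (Complex.I * (alphaPar ap am : ℂ) *
          ((x 0 : ℂ) + (x 1 : ℂ)) * ((y 0 : ℂ) + (y 1 : ℂ)) / 2) *
        Jred ap am b (x 0 - x 1) (y 0 - y 1) := by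
  unfold J2 Jred
  simp only [Fin.prod_univ_two, Ghyp_div]
  conv_lhs => rw [← integral_add_right_eq_self _ ((x 0 + x 1) / 2)]
  have key : ∀ w : ℝ,
      Complex.exp (Complex.I * (alphaPar ap am : ℂ) * ((w + (x 0 + x 1) / 2 : ℝ) : ℂ) *
          ((y 0 : ℂ) - (y 1 : ℂ))) *
        (Ghyp ap am ((x 0 : ℂ) - ((w + (x 0 + x 1) / 2 : ℝ) : ℂ) - Complex.I * b / 2) *
            Ghyp ap am (-((x 0 : ℂ) - ((w + (x 0 + x 1) / 2 : ℝ) : ℂ) + Complex.I * b / 2)) *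
          (Ghyp ap am ((x 1 : ℂ) - ((w + (x 0 + x 1) / 2 : ℝ) : ℂ) - Complex.I * b / 2) *
            Ghyp ap am (-((x 1 : ℂ) - ((w + (x 0 + x 1) / 2 : ℝ) : ℂ) + Complex.I * b / 2)))) =
      Complex.exp (Complex.I * (alphaPar ap am : ℂ) * (((x 0 + x 1) / 2 : ℝ) : ℂ) *
          ((y 0 : ℂ) - (y 1 : ℂ))) *
        (Complex.exp (Complex.I * (alphaPar ap am : ℂ) * (w : ℂ) * ((y 0 - y 1 : ℝ) : ℂ)) *
          (Ghyp ap am ((w : ℂ) + ((x 0 - x 1 : ℝ) : ℂ) / 2 - Complex.I * b / 2) *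
            Ghyp ap am ((w : ℂ) - ((x 0 - x 1 : ℝ) : ℂ) / 2 - Complex.I * b / 2) *
            Ghyp ap am (-(w : ℂ) + ((x 0 - x 1 : ℝ) : ℂ) / 2 - Complex.I * b / 2) *
            Ghyp ap am (-(w : ℂ) - ((x 0 - x 1 : ℝ) : ℂ) / 2 - Complex.I * b / 2))) := by
    intro w
    conv_rhs => rw [← mul_assoc]
    rw [← Complex.exp_add]
    congr 1
    · congr 1
      push_cast
      ring
    · exact mulA (Ghyp ap am) (by push_cast; ring) (by push_cast; ring)
        (by push_cast; ring) (by push_cast; ring)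
  simp only [key]
  rw [MeasureTheory.integral_const_mul, ← mul_assoc, ← Complex.exp_add]
  congr 2
  push_cast
  ring

lemma Jred_neg_u (ap am : ℝ) (b : ℂ) (u v : ℝ) :
    Jred ap am b u v = Jred ap am b (-u) v := by
  unfold Jred
  refine congrArg (integral volume) (funext fun z => ?_)
  refine congrArg₂ (· * ·) rfl ?_
  exact mulB (Ghyp ap am) (by push_cast; ring) (by push_cast; ring)
    (by push_cast; ring) (by push_cast; ring)

lemma Jred_neg_v (ap am : ℝ) (b : ℂ) (u v : ℝ) :
    Jred ap am b u v = Jred ap am b u (-v) := by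
  unfold Jred
  conv_rhs => rw [← integral_neg_eq_self _ volume]
  have key : ∀ z : ℝ,
      Complex.exp (Complex.I * (alphaPar ap am : ℂ) * ((-z : ℝ) : ℂ) * ((-v : ℝ) : ℂ)) *
        (Ghyp ap am (((-z : ℝ) : ℂ) + (u : ℂ) / 2 - Complex.I * b / 2) *
          Ghyp ap am (((-z : ℝ) : ℂ) - (u : ℂ) / 2 - Complex.I * b / 2) *
          Ghyp ap am (-((-z : ℝ) : ℂ) + (u : ℂ) / 2 - Complex.I * b / 2) *
          Ghyp ap am (-((-z : ℝ) : ℂ) - (u : ℂ) / 2 - Complex.I * b / 2)) =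
      Complex.exp (Complex.I * (alphaPar ap am : ℂ) * (z : ℂ) * (v : ℂ)) *
        (Ghyp ap am ((z : ℂ) + (u : ℂ) / 2 - Complex.I * b / 2) *
          Ghyp ap am ((z : ℂ) - (u : ℂ) / 2 - Complex.I * b / 2) *
          Ghyp ap am (-(z : ℂ) + (u : ℂ) / 2 - Complex.I * b / 2) *
          Ghyp ap am (-(z : ℂ) - (u : ℂ) / 2 - Complex.I * b / 2)) := by
    intro z
    refine congrArg₂ (· * ·) (congrArg Complex.exp (by push_cast; ring)) ?_
    exact mulC (Ghyp ap am) (by push_cast; ring) (by push_cast; ring)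
      (by push_cast; ring) (by push_cast; ring)
  exact (congrArg (integral volume) (funext fun z => (key z).symm))

/-- center-of-mass reduction and evenness: for `b ∈ S_a` and real `x, y`,
`J₂(b;x,y) = exp(iα(x₁+x₂)(y₁+y₂)/2) J(b;x₁−x₂,y₁−y₂)`, `J` is even in each of its last two
arguments, and consequently `J₂` is invariant under `x₁ ↔ x₂` and under `y₁ ↔ y₂`. -/
theorem statement10 (ap am : ℝ) (hap : 0 < ap) (ham : 0 < am) :
    ∀ b : ℂ, 0 < b.re → b.re < ap + am →
      (∀ x y : Fin 2 → ℝ,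
        J2 ap am b x y =
          Complex.exp (Complex.I * (alphaPar ap am : ℂ) *
              ((x 0 : ℂ) + (x 1 : ℂ)) * ((y 0 : ℂ) + (y 1 : ℂ)) / 2) *
            Jred ap am b (x 0 - x 1) (y 0 - y 1)) ∧
      (∀ u v : ℝ, Jred ap am b u v = Jred ap am b (-u) v ∧
        Jred ap am b u v = Jred ap am b u (-v)) ∧
      (∀ x y : Fin 2 → ℝ,
        J2 ap am b x y = J2 ap am b ![x 1, x 0] y ∧
        J2 ap am b x y = J2 ap am b x ![y 1, y 0]) := by
  intro b _ _
  refine ⟨fun x y => J2_eq ap am b x y, fun u v => ⟨Jred_neg_u ap am b u v, Jred_neg_v ap am b u v⟩, fun x y => ?_⟩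
  constructor
  · rw [J2_eq, J2_eq]
    simp only [Matrix.cons_val_zero, Matrix.cons_val_one, Matrix.head_cons]
    rw [show (x 1 - x 0 : ℝ) = -(x 0 - x 1) by ring, ← Jred_neg_u]
    congr 2
    ring
  · rw [J2_eq, J2_eq]
    simp only [Matrix.cons_val_zero, Matrix.cons_val_one, Matrix.head_cons]
    rw [show (y 1 - y 0 : ℝ) = -(y 0 - y 1) by ring, ← Jred_neg_v]
    congr 2
    ring
end
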